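/- arXiv:2505.22941 — 2 statements merged into one kernel-verified Lean document; each statement's English description precedes it below -/
import Mathlib

section
/- Let C be a z_0-unsolvable configuration on the Flower snark J_3, and let A = {x_0, x_1, x_{−1}}, B = {y_0, y_1, y_{−1}}, E = {v_0, v_1, v_{−1}}. Then C(A) ≤ 4, C(B) ≤ 4, and C(E) ≤ 4, where C(S) denotes the total number of pebbles on the vertices of S. -/
/-- A pebbling move on the graph `G`: remove two pebbles from a vertex `u`
(which has at least two pebbles) and add one pebble to a neighbor `v` of `u`. -/
def PebblingMove {V : Type} [DecidableEq V] (G : SimpleGraph V) (C C' : V → ℕ) : Prop :=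
  ∃ u v, G.Adj u v ∧ 2 ≤ C u ∧
    C' = fun w => if w = u then C u - 2 else if w = v then C v + 1 else C w

/-- A configuration `C` is `r`-solvable if some (possibly empty) sequence of
pebbling moves starting from `C` produces a configuration with at least one
pebble on `r`. -/
def PebblingSolvable {V : Type} [DecidableEq V] (G : SimpleGraph V) (C : V → ℕ) (r : V) : Prop :=
  ∃ C' : V → ℕ, Relation.ReflTransGen (PebblingMove G) C C' ∧ 1 ≤ C' r

/-- The pebbling number of `G`: the least `t` such that for every target
vertex `r`, every configuration of size `t` is `r`-solvable. -/
noncomputable def pebblingNumber {V : Type} [DecidableEq V] [Fintype V] (G : SimpleGraph V) : ℕ :=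
  sInf {t : ℕ | ∀ (r : V) (C : V → ℕ), (∑ v, C v) = t → PebblingSolvable G C r}

/-- The 12 vertices of the Flower snark `J₃`; `vm` denotes `v_{-1}`,
`xm` denotes `x_{-1}`, etc. -/
inductive J3V : Type
  | v0 | v1 | vm | x0 | x1 | xm | y0 | y1 | ym | z0 | z1 | zm
  deriving DecidableEq

instance : Fintype J3V where
  elems := {J3V.v0, J3V.v1, J3V.vm, J3V.x0, J3V.x1, J3V.xm,
    J3V.y0, J3V.y1, J3V.ym, J3V.z0, J3V.z1, J3V.zm}
  complete := by
    intro x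
    cases x <;> simp

open J3V in
/-- The Flower snark `J₃` (Tietze's graph), with its 18 edges. -/
def J3 : SimpleGraph J3V := SimpleGraph.fromEdgeSet
  ({s(z0, v0), s(z0, x0), s(z0, y0), s(v0, v1), s(v0, vm),
    s(x0, x1), s(x0, xm), s(y0, y1), s(y0, ym), s(v1, vm),
    s(v1, z1), s(vm, zm), s(x1, z1), s(y1, z1), s(xm, zm),
    s(ym, zm), s(xm, y1), s(x1, ym)} : Set (Sym2 J3V))

/-!
Each of the three sets is `{a, b, c}` with `a` adjacent to `z₀` and `b, c` adjacent to `a`.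
Moving pairs of pebbles from `b` and `c` onto `a` puts `C a + ⌊C b / 2⌋ + ⌊C c / 2⌋` pebbles
on `a`, which is at least `2` as soon as `C a + C b + C c ≥ 5`; one more move then reaches `z₀`.
-/

open Relation

variable {V : Type} [DecidableEq V] {G : SimpleGraph V}

theorem PebblingSolvable.of_reflTransGen {C D : V → ℕ} {r : V}
    (hCD : ReflTransGen (PebblingMove G) C D) (hD : PebblingSolvable G D r) :
    PebblingSolvable G C r :=
  let ⟨E, hDE, hE⟩ := hD
  ⟨E, hCD.trans hDE, hE⟩

theorem PebblingSolvable.of_two_le_of_adj {C : V → ℕ} {a r : V} (har : G.Adj a r)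
    (ha : 2 ≤ C a) : PebblingSolvable G C r :=
  ⟨_, ReflTransGen.single ⟨a, r, har, ha, rfl⟩, by simp [har.ne']⟩

theorem exists_reflTransGen_move_pebbles {u v : V} (huv : G.Adj u v) (C : V → ℕ) (k : ℕ)
    (hk : 2 * k ≤ C u) :
    ∃ D, ReflTransGen (PebblingMove G) C D ∧ D u + 2 * k = C u ∧ D v = C v + k ∧
      ∀ w, w ≠ u → w ≠ v → D w = C w := by
  induction k with
  | zero => exact ⟨C, .refl, rfl, rfl, fun _ _ _ => rfl⟩
  | succ k ih =>
    obtain ⟨D, hCD, hDu, hDv, hDw⟩ := ih (by omega)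
    refine ⟨_, hCD.tail ⟨u, v, huv, by omega, rfl⟩, ?_, ?_, ?_⟩
    · rw [if_pos rfl]
      omega
    · simp [huv.ne', hDv, add_assoc]
    · intro w hwu hwv
      simp [hwu, hwv, hDw w hwu hwv]

theorem exists_reflTransGen_add_sum_div_two_le {a : V} (S : Finset V) (haS : a ∉ S)
    (hS : ∀ b ∈ S, G.Adj b a) (C : V → ℕ) :
    ∃ D, ReflTransGen (PebblingMove G) C D ∧ C a + ∑ b ∈ S, C b / 2 ≤ D a := by
  induction S using Finset.induction_on generalizing C with
  | empty => exact ⟨C, .refl, by simp⟩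
  | insert b S hbS ih =>
    have haS' : a ∉ S := fun h => haS (S.mem_insert_of_mem h)
    obtain ⟨D₁, hCD₁, -, hD₁a, hD₁S⟩ :=
      exists_reflTransGen_move_pebbles (hS b (S.mem_insert_self b)) C (C b / 2) (by omega)
    obtain ⟨D₂, hD₁D₂, hD₂a⟩ := ih haS' (fun c hc => hS c (S.mem_insert_of_mem hc)) D₁
    have hsum : ∑ c ∈ S, D₁ c / 2 = ∑ c ∈ S, C c / 2 :=
      Finset.sum_congr rfl fun c hc => by
        rw [hD₁S c (ne_of_mem_of_not_mem hc hbS) (ne_of_mem_of_not_mem hc haS')]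
    refine ⟨D₂, hCD₁.trans hD₁D₂, ?_⟩
    rw [Finset.sum_insert hbS]
    omega

theorem sum_le_two_mul_sum_div_two_add_card {ι : Type*} (S : Finset ι) (C : ι → ℕ) :
    ∑ v ∈ S, C v ≤ 2 * ∑ v ∈ S, C v / 2 + S.card := by
  rw [Finset.mul_sum, Finset.card_eq_sum_ones, ← Finset.sum_add_distrib]
  exact Finset.sum_le_sum fun v _ => by omega

theorem PebblingSolvable.of_five_le_of_adj {C : V → ℕ} {a b c r : V} (har : G.Adj a r)
    (hba : G.Adj b a) (hca : G.Adj c a) (h5 : 5 ≤ ∑ v ∈ {a, b, c}, C v) :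
    PebblingSolvable G C r := by
  have haS : a ∉ ({b, c} : Finset V) := by simp [hba.ne', hca.ne']
  obtain ⟨D, hCD, hDa⟩ := exists_reflTransGen_add_sum_div_two_le (G := G) {b, c} haS
    (by simp [hba, hca]) C
  have hbound := sum_le_two_mul_sum_div_two_add_card ({b, c} : Finset V) C
  have hcard : ({b, c} : Finset V).card ≤ 2 := Finset.card_le_two
  rw [Finset.sum_insert haS] at h5
  exact .of_reflTransGen hCD (.of_two_le_of_adj har (by omega))

/-- For a `z₀`-unsolvable configuration `C` on `J₃`, each of the sets
`A = {x₀, x₁, x₋₁}`, `B = {y₀, y₁, y₋₁}`, `E = {v₀, v₁, v₋₁}` carries at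
most 4 pebbles. -/
theorem J3_z0_unsolvable_bounds (C : J3V → ℕ)
    (h : ¬ PebblingSolvable J3 C J3V.z0) :
    (∑ v ∈ ({J3V.x0, J3V.x1, J3V.xm} : Finset J3V), C v) ≤ 4 ∧
    (∑ v ∈ ({J3V.y0, J3V.y1, J3V.ym} : Finset J3V), C v) ≤ 4 ∧
    (∑ v ∈ ({J3V.v0, J3V.v1, J3V.vm} : Finset J3V), C v) ≤ 4 := by
  refine ⟨?_, ?_, ?_⟩ <;> by_contra! h5 <;>
    exact h (.of_five_le_of_adj (by simp [J3]) (by simp [J3]) (by simp [J3]) h5)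
end

section
/- On the truncated tetrahedral graph G (House of Graphs #1395), the configuration C of size 12 given by C(6) = 7, C(7) = 3, C(10) = 1, C(11) = 1, and C(v) = 0 for all other vertices v, is 1-unsolvable (i.e., unsolvable for the target vertex labeled 1). Consequently π(G) > 12 and G is not Class 0. -/
set_option maxRecDepth 100000
set_option maxHeartbeats 2000000

/-- The truncated tetrahedral graph (House of Graphs #1395).
Vertex labeled `k` (for `k ∈ {1, …, 12}`) is represented by `(k : Fin 12)`
(so vertex `12` is `(12 : Fin 12) = 0`; this labeling is injective). -/
def truncatedTetrahedral : SimpleGraph (Fin 12) := SimpleGraph.fromEdgeSet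
  ({s(1, 2), s(1, 3), s(1, 4), s(2, 10), s(2, 9), s(3, 12), s(4, 11), s(12, 8), s(12, 6), s(11, 7), s(11, 5), s(3, 4), s(10, 8), s(9, 7), s(10, 9), s(8, 6), s(7, 5), s(6, 5)} : Set (Sym2 (Fin 12)))

/-! ### Auxiliary machinery -/

/-- Binary search trees of naturals, used to store the set of reachable
encoded configurations. -/
inductive NTree where
  | leaf : NTree
  | node : NTree → Nat → NTree → NTree

def NTree.mem (n : Nat) : NTree → Bool
  | .leaf => false
  | .node l k r => if n < k then l.mem n else if k < n then r.mem n else true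

def NTree.all (p : Nat → Bool) : NTree → Bool
  | .leaf => true
  | .node l k r => p k && l.all p && r.all p

theorem NTree.mem_all {p : Nat → Bool} {t : NTree} (h : t.all p = true)
    {n : Nat} (hn : t.mem n = true) : p n = true := by
  induction t with
  | leaf => simp [NTree.mem] at hn
  | node l k r ihl ihr =>
    simp only [NTree.all, Bool.and_eq_true] at h
    unfold NTree.mem at hn
    split at hn
    · exact ihl h.1.2 hn
    · split at hn
      · exact ihr h.2 hn
      · have : n = k := by omega
        subst this; exact h.1.1

def ttTree : NTree := (.node (.node (.node (.node (.node (.node (.node (.node (.node (.node .leaf 1 .leaf) 256 (.node .leaf 257 .leaf)) 65536 (.node (.node .leaf 1048576 .leaf) 1048577 (.node .leaf 1048832 (.node .leaf 2097152 .leaf)))) 16777216 (.node (.node (.node .leaf 16777217 .leaf) 16777472 (.node .leaf 16777473 (.node .leaf 16842752 .leaf))) 16842753 (.node (.node .leaf 16843008 .leaf) 17825792 (.node .leaf 17825793 (.node .leaf 17826048 .leaf))))) 17826049 (.node (.node (.node (.node .leaf 17891328 .leaf) 18874368 (.node .leaf 18874624 (.node .leaf 33554432 .leaf))) 33554688 (.node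 (.node .leaf 34603008 .leaf) 50331904 (.node .leaf 50397184 (.node .leaf 51380224 .leaf)))) 51380480 (.node (.node (.node .leaf 268435456 .leaf) 268435457 (.node .leaf 268435712 (.node .leaf 268435713 .leaf))) 268500992 (.node (.node .leaf 268500993 .leaf) 268501248 (.node .leaf 269484032 (.node .leaf 269484033 .leaf)))))) 269484288 (.node (.node (.node (.node (.node .leaf 269549568 .leaf) 270532608 (.node .leaf 285212672 .leaf)) 285212673 (.node (.node .leaf 285212928 .leaf) 285278209 (.node .leaf 285278464 (.node .leaf 285278465 .leaf)))) 286261248 (.node (.node (.node .leaf 286261249 .leaf) 286261504 (.node .leaf 286261505 (.node .leaf 286327040 .leaf))) 287310080 (.node (.node .leaf 301990144 .leaf) 302055424 (.node .leaf 303038464 (.node .leaf 318767104 .leaf))))) 318832896 (.node (.node (.node (.node .leaf 319815936 .leaf) 536870912 (.node .leaf 536870913 (.node .leaf 536871168 .leaf))) 537919488 (.node (.node .leaf 553648129 .leaf) 553648384 (.node .leaf 553648385 (.node .leaf 554696960 .leaf)))) 570425344 (.node (.node (.node .leaf 587202816 .leaf) 4294967296 (.node .leaf 4294967297 (.node .leaf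 4294967552 .leaf))) 4296015872 (.node (.node .leaf 4311744512 .leaf) 4311744513 (.node .leaf 4311744768 (.node .leaf 4311810048 .leaf))))))) 4312793088 (.node (.node (.node (.node (.node (.node .leaf 4312793089 .leaf) 4312793344 (.node .leaf 4313841664 .leaf)) 4328521728 (.node (.node .leaf 4345298944 .leaf) 4346347520 (.node .leaf 4563402752 (.node .leaf 4563402753 .leaf)))) 4563403008 (.node (.node (.node .leaf 4563468288 .leaf) 4564451328 (.node .leaf 4580179968 (.node .leaf 4580245504 .leaf))) 4580245505 (.node (.node .leaf 4580245760 .leaf) 4581228544 (.node .leaf 4581228545 (.node .leaf 4581228800 .leaf))))) 4581294080 (.node (.node (.node (.node .leaf 4582277120 .leaf) 4596957184 (.node .leaf 4613799936 (.node .leaf 4614782976 .leaf))) 4831838208 (.node (.node .leaf 4848615424 .leaf) 4848615425 (.node .leaf 4848615680 (.node .leaf 4849664000 .leaf)))) 4882169856 (.node (.node (.node .leaf 8589934592 .leaf) 8606711808 (.node .leaf 8607760384 (.node .leaf 8858370048 .leaf))) 8875212800 (.node (.node .leaf 8876195840 .leaf) 9143582720 (.node .leaf 68719476736 (.node .leaf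 68719476737 .leaf)))))) 68719476992 (.node (.node (.node (.node (.node .leaf 68720525312 .leaf) 68736253952 (.node .leaf 68736253953 (.node .leaf 68736254208 .leaf))) 68736254209 (.node (.node .leaf 68736319488 .leaf) 68737302528 (.node .leaf 68737302529 (.node .leaf 68737302784 .leaf)))) 68738351104 (.node (.node (.node .leaf 68753031168 .leaf) 68769808384 (.node .leaf 68769808640 (.node .leaf 68770856960 .leaf))) 68987912192 (.node (.node .leaf 68987912193 .leaf) 68987977728 (.node .leaf 68988960768 (.node .leaf 69004689408 .leaf))))) 69004754944 (.node (.node (.node (.node .leaf 69004754945 .leaf) 69005737984 (.node .leaf 69005737985 (.node .leaf 69005803520 .leaf))) 69006786560 (.node (.node .leaf 69021466624 .leaf) 69038309376 (.node .leaf 69039292416 (.node .leaf 69256347648 .leaf)))) 69273124864 (.node (.node (.node .leaf 69273124865 .leaf) 69274173440 (.node .leaf 69306679296 (.node .leaf 73014444032 .leaf))) 73031221248 (.node (.node .leaf 73031221249 .leaf) 73031221504 (.node .leaf 73032269824 (.node .leaf 73064775680 .leaf)))))))) 73282879488 (.node (.node (.node (.node (.node (.node (.node .leaf 73299722240 .leaf)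 73300705280 (.node .leaf 73568092160 .leaf)) 77326188544 (.node (.node .leaf 137438953472 .leaf) 137455730688 (.node .leaf 137455730689 (.node .leaf 137456779264 .leaf)))) 137489285120 (.node (.node (.node .leaf 141750697984 .leaf) 1099511627776 (.node .leaf 1099511627777 (.node .leaf 1099511627778 .leaf))) 1099511627779 (.node (.node .leaf 1099511628032 .leaf) 1099511631872 (.node .leaf 1099511631873 (.node .leaf 1099511693312 .leaf))))) 1099511693313 (.node (.node (.node (.node .leaf 1099512676352 .leaf) 1099512676353 (.node .leaf 1099512676354 (.node .leaf 1099512680448 .leaf))) 1099512741888 (.node (.node .leaf 1099513724928 .leaf) 1099513724929 (.node .leaf 1099514773504 (.node .leaf 1099528404992 .leaf)))) 1099528404993 (.node (.node (.node .leaf 1099528405248 .leaf) 1099528405249 (.node .leaf 1099528470528 (.node .leaf 1099528470529 .leaf))) 1099528470530 (.node (.node .leaf 1099528474624 .leaf) 1099529453568 (.node .leaf 1099529453569 (.node .leaf 1099529453570 .leaf)))))) 1099529453571 (.node (.node (.node (.node (.node .leaf 1099529453824 .leaf) 1099529457664 (.node .leaf 1099529457665 (.node .leaf 1099529519104 .leaf)))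 1099529519105 (.node (.node .leaf 1099530502144 .leaf) 1099530502145 (.node .leaf 1099530502146 (.node .leaf 1099530506240 .leaf)))) 1099530567680 (.node (.node (.node .leaf 1099531550720 .leaf) 1099531550721 (.node .leaf 1099532599296 (.node .leaf 1099545182208 .leaf))) 1099545182209 (.node (.node .leaf 1099545182210 .leaf) 1099545186304 (.node .leaf 1099545247744 (.node .leaf 1099546230784 .leaf))))) 1099546230785 (.node (.node (.node (.node .leaf 1099547279360 .leaf) 1099561959424 (.node .leaf 1099561959680 (.node .leaf 1099562024960 .leaf))) 1099562024961 (.node (.node .leaf 1099563008000 .leaf) 1099563008001 (.node .leaf 1099563008002 (.node .leaf 1099563012096 .leaf)))) 1099563073536 (.node (.node (.node .leaf 1099564056576 .leaf) 1099564056577 (.node .leaf 1099565105152 (.node .leaf 1099578736640 .leaf))) 1099578736641 (.node (.node .leaf 1099579785216 .leaf) 1099595579392 (.node .leaf 1099596562432 (.node .leaf 1099596562433 .leaf))))))) 1099597611008 (.node (.node (.node (.node (.node (.node .leaf 1099612291072 .leaf) 1099630116864 (.node .leaf 1099780063232 .leaf)) 1099780063233 (.node (.node .leaf 1099780063234 .leaf)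 1099780063235 (.node .leaf 1099780067328 (.node .leaf 1099780067329 .leaf)))) 1099780128768 (.node (.node (.node .leaf 1099780128769 .leaf) 1099780128770 (.node .leaf 1099780132864 (.node .leaf 1099781111808 .leaf))) 1099781111809 (.node (.node .leaf 1099781111810 .leaf) 1099781115904 (.node .leaf 1099781177344 (.node .leaf 1099781177345 .leaf))))) 1099782160384 (.node (.node (.node (.node .leaf 1099782160385 .leaf) 1099782225920 (.node .leaf 1099783208960 (.node .leaf 1099796840448 .leaf))) 1099796840449 (.node (.node .leaf 1099796840450 .leaf) 1099796844544 (.node .leaf 1099796905984 (.node .leaf 1099796905985 .leaf)))) 1099796905986 (.node (.node (.node .leaf 1099796905987 .leaf) 1099796910080 (.node .leaf 1099796910081 (.node .leaf 1099797889024 .leaf))) 1099797889025 (.node (.node .leaf 1099797889026 .leaf) 1099797889027 (.node .leaf 1099797893120 (.node .leaf 1099797893121 .leaf)))))) 1099797954561 (.node (.node (.node (.node (.node .leaf 1099797954562 .leaf) 1099797958656 (.node .leaf 1099798937600 (.node .leaf 1099798937601 .leaf))) 1099798937602 (.node (.node .leaf 1099798941696 .leaf) 1099799003136 (.node .leaf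 1099799003137 (.node .leaf 1099799986176 .leaf)))) 1099799986177 (.node (.node (.node .leaf 1099800051712 .leaf) 1099801034752 (.node .leaf 1099813617664 (.node .leaf 1099813617665 .leaf))) 1099813617666 (.node (.node .leaf 1099813621760 .leaf) 1099813683200 (.node .leaf 1099813683201 (.node .leaf 1099814666240 .leaf))))) 1099814666241 (.node (.node (.node (.node .leaf 1099814731776 .leaf) 1099815714816 (.node .leaf 1099830394880 (.node .leaf 1099830394881 .leaf))) 1099830460417 (.node (.node .leaf 1099830460418 .leaf) 1099830464512 (.node .leaf 1099831443456 (.node .leaf 1099831443457 .leaf)))) 1099831443458 (.node (.node (.node .leaf 1099831447552 .leaf) 1099831508992 (.node .leaf 1099831508993 (.node .leaf 1099832492032 .leaf))) 1099832492033 (.node (.node .leaf 1099832557568 .leaf) 1099833540608 (.node .leaf 1099847172096 (.node .leaf 1099847172097 .leaf))))))))) 1099847237632 (.node (.node (.node (.node (.node (.node (.node (.node .leaf 1099848220672 .leaf) 1099863949312 (.node .leaf 1099864014848 .leaf)) 1099864014849 (.node (.node .leaf 1099864997888 .leaf) 1099864997889 (.node .leaf 1099865063424 (.node .leaf 1099866046464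 .leaf)))) 1099880726528 (.node (.node (.node .leaf 1099897569280 .leaf) 1099898552320 (.node .leaf 1100048498688 (.node .leaf 1100048498689 .leaf))) 1100048498690 (.node (.node .leaf 1100048502784 .leaf) 1100048564224 (.node .leaf 1100049547264 (.node .leaf 1100049547265 .leaf))))) 1100050595840 (.node (.node (.node (.node .leaf 1100065275904 .leaf) 1100065275905 (.node .leaf 1100065275906 (.node .leaf 1100065275907 .leaf))) 1100065280000 (.node (.node .leaf 1100065280001 .leaf) 1100065341440 (.node .leaf 1100065341441 (.node .leaf 1100066324480 .leaf)))) 1100066324481 (.node (.node (.node .leaf 1100066324482 .leaf) 1100066328576 (.node .leaf 1100066390016 (.node .leaf 1100067373056 .leaf))) 1100067373057 (.node (.node .leaf 1100068421632 .leaf) 1100082053120 (.node .leaf 1100082053121 (.node .leaf 1100083101696 .leaf)))))) 1100098830336 (.node (.node (.node (.node (.node .leaf 1100098830337 .leaf) 1100098830338 (.node .leaf 1100098834432 (.node .leaf 1100098895872 .leaf))) 1100099878912 (.node (.node .leaf 1100099878913 .leaf) 1100100927488 (.node .leaf 1100115607552 (.node .leaf 1100132384768 .leaf)))) 1100132384769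 (.node (.node (.node .leaf 1100133433344 .leaf) 1100165939200 (.node .leaf 1100316934144 (.node .leaf 1100316934145 .leaf))) 1100316999680 (.node (.node .leaf 1100317982720 .leaf) 1100333711360 (.node .leaf 1100333711361 (.node .leaf 1100333776897 .leaf))))) 1100334759936 (.node (.node (.node (.node .leaf 1100334759937 .leaf) 1100334825472 (.node .leaf 1100335808512 (.node .leaf 1100350488576 .leaf))) 1100367265792 (.node (.node .leaf 1100367331328 .leaf) 1100368314368 (.node .leaf 1100585369600 (.node .leaf 1100602146816 .leaf)))) 1100602146817 (.node (.node (.node .leaf 1100603195392 .leaf) 1100635701248 (.node .leaf 1103806595072 (.node .leaf 1103806595073 .leaf))) 1103806595074 (.node (.node .leaf 1103806599168 .leaf) 1103806660608 (.node .leaf 1103807643648 (.node .leaf 1103807643649 .leaf))))))) 1103808692224 (.node (.node (.node (.node (.node (.node .leaf 1103823372288 .leaf) 1103823372544 (.node .leaf 1103823437824 .leaf)) 1103823437825 (.node (.node .leaf 1103824420864 .leaf) 1103824420865 (.node .leaf 1103824420866 (.node .leaf 1103824424960 .leaf)))) 1103824486400 (.node (.node (.node .leaf 1103825469440 .leaf)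 1103825469441 (.node .leaf 1103826518016 (.node .leaf 1103840149504 .leaf))) 1103840149505 (.node (.node .leaf 1103841198080 .leaf) 1103856992256 (.node .leaf 1103857975296 (.node .leaf 1103857975297 .leaf))))) 1103859023872 (.node (.node (.node (.node .leaf 1103873703936 .leaf) 1103891529728 (.node .leaf 1104075030528 (.node .leaf 1104075030529 .leaf))) 1104075030530 (.node (.node .leaf 1104075034624 .leaf) 1104075096064 (.node .leaf 1104075096065 (.node .leaf 1104076079104 .leaf)))) 1104076079105 (.node (.node (.node .leaf 1104076144640 .leaf) 1104077127680 (.node .leaf 1104091807744 (.node .leaf 1104091807745 .leaf))) 1104091873280 (.node (.node .leaf 1104091873281 .leaf) 1104091873282 (.node .leaf 1104091877376 (.node .leaf 1104092856320 .leaf)))))) 1104092856321 (.node (.node (.node (.node (.node .leaf 1104092856322 .leaf) 1104092860416 (.node .leaf 1104092921856 (.node .leaf 1104092921857 .leaf))) 1104093904896 (.node (.node .leaf 1104093904897 .leaf) 1104093970432 (.node .leaf 1104094953472 (.node .leaf 1104108584960 .leaf)))) 1104108584961 (.node (.node (.node .leaf 1104108650496 .leaf) 1104109633536 (.node .leaf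 1104125362176 (.node .leaf 1104125427712 .leaf))) 1104125427713 (.node (.node .leaf 1104126410752 .leaf) 1104126410753 (.node .leaf 1104126476288 (.node .leaf 1104127459328 .leaf))))) 1104142139392 (.node (.node (.node (.node .leaf 1104158982144 .leaf) 1104159965184 (.node .leaf 1104343465984 (.node .leaf 1104343465985 .leaf))) 1104344514560 (.node (.node .leaf 1104360243200 .leaf) 1104360243201 (.node .leaf 1104360243202 (.node .leaf 1104360247296 .leaf)))) 1104360308736 (.node (.node (.node .leaf 1104361291776 .leaf) 1104361291777 (.node .leaf 1104362340352 (.node .leaf 1104377020416 .leaf))) 1104393797632 (.node (.node .leaf 1104393797633 .leaf) 1104394846208 (.node .leaf 1104427352064 (.node .leaf 1104611901440 .leaf)))))))) 1104628678656 (.node (.node (.node (.node (.node (.node (.node .leaf 1104628744192 .leaf) 1104629727232 (.node .leaf 1104897114112 .leaf)) 1108101562368 (.node (.node .leaf 1108101562369 .leaf) 1108102610944 (.node .leaf 1108118405120 (.node .leaf 1108119388160 .leaf)))) 1108119388161 (.node (.node (.node .leaf 1108120436736 .leaf) 1108135116800 (.node .leaf 1108152942592 (.node .leaf 1108369997824 .leaf)))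 1108369997825 (.node (.node .leaf 1108370063360 .leaf) 1108371046400 (.node .leaf 1108386775040 (.node .leaf 1108386840576 .leaf))))) 1108386840577 (.node (.node (.node (.node .leaf 1108387823616 .leaf) 1108387823617 (.node .leaf 1108387889152 (.node .leaf 1108388872192 .leaf))) 1108403552256 (.node (.node .leaf 1108420395008 .leaf) 1108421378048 (.node .leaf 1108638433280 (.node .leaf 1108655210496 .leaf)))) 1108655210497 (.node (.node (.node .leaf 1108656259072 .leaf) 1108688764928 (.node .leaf 1112396529664 (.node .leaf 1112414355456 .leaf))) 1112664965120 (.node (.node .leaf 1112681807872 .leaf) 1112682790912 (.node .leaf 1112950177792 (.node .leaf 1168231104512 .leaf)))))) 1168231104513 (.node (.node (.node (.node (.node .leaf 1168231104514 .leaf) 1168231108608 (.node .leaf 1168231170048 (.node .leaf 1168232153088 .leaf))) 1168232153089 (.node (.node .leaf 1168233201664 .leaf) 1168247881728 (.node .leaf 1168247881729 (.node .leaf 1168247881730 .leaf)))) 1168247881731 (.node (.node (.node .leaf 1168247885824 .leaf) 1168247885825 (.node .leaf 1168247947264 (.node .leaf 1168247947265 .leaf))) 1168248930304 (.node (.node .leaf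 1168248930305 .leaf) 1168248930306 (.node .leaf 1168248934400 (.node .leaf 1168248995840 .leaf))))) 1168249978880 (.node (.node (.node (.node .leaf 1168249978881 .leaf) 1168251027456 (.node .leaf 1168264658944 (.node .leaf 1168264658945 .leaf))) 1168265707520 (.node (.node .leaf 1168281436160 .leaf) 1168281436161 (.node .leaf 1168281436162 (.node .leaf 1168281440256 .leaf)))) 1168281501696 (.node (.node (.node .leaf 1168282484736 .leaf) 1168282484737 (.node .leaf 1168283533312 (.node .leaf 1168298213376 .leaf))) 1168314990592 (.node (.node .leaf 1168314990593 .leaf) 1168316039168 (.node .leaf 1168348545024 (.node .leaf 1168499539968 .leaf))))))) 1168499539969 (.node (.node (.node (.node (.node (.node .leaf 1168499605504 .leaf) 1168500588544 (.node .leaf 1168516317184 .leaf)) 1168516317185 (.node (.node .leaf 1168516382721 .leaf) 1168517365760 (.node .leaf 1168517365761 (.node .leaf 1168517431296 .leaf)))) 1168518414336 (.node (.node (.node .leaf 1168533094400 .leaf) 1168549871616 (.node .leaf 1168549937152 (.node .leaf 1168550920192 .leaf))) 1168767975424 (.node (.node .leaf 1168784752640 .leaf) 1168784752641 (.node .leaf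 1168785801216 (.node .leaf 1168818307072 .leaf))))) 1172526071808 (.node (.node (.node (.node .leaf 1172526071809 .leaf) 1172527120384 (.node .leaf 1172542849024 (.node .leaf 1172542849025 .leaf))) 1172542849026 (.node (.node .leaf 1172542853120 .leaf) 1172542914560 (.node .leaf 1172543897600 (.node .leaf 1172543897601 .leaf)))) 1172544946176 (.node (.node (.node .leaf 1172559626240 .leaf) 1172576403456 (.node .leaf 1172576403457 (.node .leaf 1172577452032 .leaf))) 1172609957888 (.node (.node .leaf 1172794507264 .leaf) 1172811284480 (.node .leaf 1172811350016 (.node .leaf 1172812333056 .leaf)))))) 1173079719936 (.node (.node (.node (.node (.node .leaf 1176821039104 .leaf) 1176837816320 (.node .leaf 1176837816321 (.node .leaf 1176838864896 .leaf))) 1176871370752 (.node (.node .leaf 1181132783616 .leaf) 1236950581248 (.node .leaf 1236967358464 (.node .leaf 1236967358465 .leaf)))) 1236968407040 (.node (.node (.node .leaf 1237000912896 .leaf) 1241262325760 (.node .leaf 2199023255552 (.node .leaf 2199023255553 .leaf))) 2199024304128 (.node (.node .leaf 2199040032768 .leaf) 2199040032769 (.node .leaf 2199040098304 (.node .leaf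 2199041081344 .leaf))))) 2199041081345 (.node (.node (.node (.node .leaf 2199042129920 .leaf) 2199056809984 (.node .leaf 2199073587200 (.node .leaf 2199074635776 .leaf))) 2199291691008 (.node (.node .leaf 2199291691009 .leaf) 2199291756544 (.node .leaf 2199292739584 (.node .leaf 2199308468224 .leaf)))) 2199308533760 (.node (.node (.node .leaf 2199308533761 .leaf) 2199309516800 (.node .leaf 2199309516801 (.node .leaf 2199309582336 .leaf))) 2199310565376 (.node (.node .leaf 2199325245440 .leaf) 2199342088192 (.node .leaf 2199343071232 (.node .leaf 2199560126464 .leaf)))))))))) 2199576903680 (.node (.node (.node (.node (.node (.node (.node (.node (.node .leaf 2199576903681 .leaf) 2199577952256 (.node .leaf 2199610458112 .leaf)) 2203318222848 (.node (.node .leaf 2203335000064 .leaf) 2203336048640 (.node .leaf 2203586658304 (.node .leaf 2203603501056 .leaf)))) 2203604484096 (.node (.node (.node .leaf 2203871870976 .leaf) 2267742732288 (.node .leaf 2267759509504 (.node .leaf 2267759509505 .leaf))) 2267760558080 (.node (.node .leaf 2267793063936 .leaf) 2272054476800 (.node .leaf 17592186044416 (.node .leaf 17592186044417 .leaf)))))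 17592186044672 (.node (.node (.node (.node .leaf 17592187092992 .leaf) 17592202821632 (.node .leaf 17592202821633 (.node .leaf 17592202821888 .leaf))) 17592202821889 (.node (.node .leaf 17592203870208 .leaf) 17592203870209 (.node .leaf 17592203870464 (.node .leaf 17592204918784 .leaf)))) 17592219598848 (.node (.node (.node .leaf 17592236376320 .leaf) 17592237424640 (.node .leaf 17592454479872 (.node .leaf 17592454479873 .leaf))) 17592454480128 (.node (.node .leaf 17592454480129 .leaf) 17592455528449 (.node .leaf 17592455528704 (.node .leaf 17592456577024 .leaf)))))) 17592471257088 (.node (.node (.node (.node (.node .leaf 17592471257344 .leaf) 17592471257345 (.node .leaf 17592472305665 (.node .leaf 17592472305920 .leaf))) 17592472305921 (.node (.node .leaf 17592473354496 .leaf) 17592488034560 (.node .leaf 17592489082880 (.node .leaf 17592504811776 .leaf)))) 17592505860352 (.node (.node (.node .leaf 17592722915328 .leaf) 17592739692544 (.node .leaf 17592739692545 (.node .leaf 17592739692800 .leaf))) 17592740741120 (.node (.node .leaf 17592773246976 .leaf) 17592991350785 (.node .leaf 17592991351040 (.node .leaf 17592992399360 .leaf))))) 17593008128001 (.node (.node (.node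 (.node .leaf 17593008128256 .leaf) 17593008128257 (.node .leaf 17593009176832 (.node .leaf 17593024905216 .leaf))) 17593041682688 (.node (.node .leaf 17596481011712 .leaf) 17596497788928 (.node .leaf 17596497788929 (.node .leaf 17596497789184 .leaf)))) 17596498837504 (.node (.node (.node .leaf 17596531343360 .leaf) 17596749447168 (.node .leaf 17596749447169 (.node .leaf 17596749447424 .leaf))) 17596750495744 (.node (.node .leaf 17596766224384 .leaf) 17596766224640 (.node .leaf 17596767272960 (.node .leaf 17596767272961 .leaf))))))) 17596767273216 (.node (.node (.node (.node (.node (.node .leaf 17596768321536 .leaf) 17596783001600 (.node .leaf 17596800827392 .leaf)) 17597034659840 (.node (.node .leaf 17597286318080 .leaf) 17597303095296 (.node .leaf 17597303095297 (.node .leaf 17597303095552 .leaf)))) 17597304143872 (.node (.node (.node .leaf 17597336649728 .leaf) 17600792756224 (.node .leaf 17601044414464 (.node .leaf 17601062240256 .leaf))) 17601598062592 (.node (.node .leaf 17660905521152 .leaf) 17660922298368 (.node .leaf 17660922298369 (.node .leaf 17660922298624 .leaf))))) 17660923346944 (.node (.node (.node (.node .leaf 17660955852800 .leaf) 17661173956608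 (.node .leaf 17661173956609 (.node .leaf 17661173956864 .leaf))) 17661175005184 (.node (.node .leaf 17661190733824 .leaf) 17661190733825 (.node .leaf 17661190734080 (.node .leaf 17661190734081 .leaf)))) 17661191782400 (.node (.node (.node .leaf 17661191782401 .leaf) 17661191782656 (.node .leaf 17661192830976 (.node .leaf 17661207511040 .leaf))) 17661224288512 (.node (.node .leaf 17661225336832 .leaf) 17661459169280 (.node .leaf 17661710827520 (.node .leaf 17661727604736 .leaf)))))) 17661727604737 (.node (.node (.node (.node (.node .leaf 17661728653312 .leaf) 17661761159168 (.node .leaf 17665217265664 (.node .leaf 17665468923904 .leaf))) 17665485701120 (.node (.node .leaf 17665485701121 .leaf) 17665485701376 (.node .leaf 17665486749696 (.node .leaf 17665519255552 .leaf)))) 17666022572032 (.node (.node (.node .leaf 17669780668416 .leaf) 17729641775104 (.node .leaf 17729893433344 (.node .leaf 17729910210560 .leaf))) 17729910210561 (.node (.node .leaf 17729911259136 .leaf) 17729943764992 (.node .leaf 17734205177856 (.node .leaf 18691697672192 .leaf))))) 18691697672193 (.node (.node (.node (.node .leaf 18691697672194 .leaf) 18691697672448 (.node .leaf 18691697676288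 (.node .leaf 18691697737728 .leaf))) 18691698720768 (.node (.node .leaf 18691698720769 .leaf) 18691699769344 (.node .leaf 18691714449408 (.node .leaf 18691714449409 .leaf)))) 18691714449410 (.node (.node (.node .leaf 18691714449411 .leaf) 18691714449665 (.node .leaf 18691714453504 (.node .leaf 18691714453505 .leaf))) 18691714514944 (.node (.node .leaf 18691714514945 .leaf) 18691715497984 (.node .leaf 18691715497985 (.node .leaf 18691715497986 .leaf)))))))) 18691715498240 (.node (.node (.node (.node (.node (.node (.node .leaf 18691715502080 .leaf) 18691715563520 (.node .leaf 18691716546560 .leaf)) 18691716546561 (.node (.node .leaf 18691717595136 .leaf) 18691731226624 (.node .leaf 18691731226625 (.node .leaf 18691732275200 .leaf)))) 18691748003840 (.node (.node (.node .leaf 18691748003841 .leaf) 18691748003842 (.node .leaf 18691748004096 (.node .leaf 18691748007936 .leaf))) 18691748069376 (.node (.node .leaf 18691749052416 .leaf) 18691749052417 (.node .leaf 18691750100992 (.node .leaf 18691764781056 .leaf))))) 18691781558272 (.node (.node (.node (.node .leaf 18691781558273 .leaf) 18691782606848 (.node .leaf 18691815112704 (.node .leaf 18691966107648 .leaf)))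 18691966107649 (.node (.node .leaf 18691966107650 .leaf) 18691966107651 (.node .leaf 18691966111744 (.node .leaf 18691966111745 .leaf)))) 18691966173184 (.node (.node (.node .leaf 18691967156224 .leaf) 18691967156225 (.node .leaf 18691967156226 (.node .leaf 18691967160320 .leaf))) 18691968204800 (.node (.node .leaf 18691968204801 .leaf) 18691969253376 (.node .leaf 18691982884864 (.node .leaf 18691982884865 .leaf)))))) 18691982884866 (.node (.node (.node (.node (.node .leaf 18691982888960 .leaf) 18691982950400 (.node .leaf 18691982950401 (.node .leaf 18691983933440 .leaf))) 18691983933441 (.node (.node .leaf 18691983933442 .leaf) 18691983933443 (.node .leaf 18691983937536 (.node .leaf 18691983937537 .leaf)))) 18691983998976 (.node (.node (.node .leaf 18691984982016 .leaf) 18691984982017 (.node .leaf 18691984982018 (.node .leaf 18691984986112 .leaf))) 18691986030593 (.node (.node .leaf 18691987079168 .leaf) 18691999662080 (.node .leaf 18691999662081 (.node .leaf 18691999662082 .leaf))))) 18691999666176 (.node (.node (.node (.node .leaf 18692000710656 .leaf) 18692000710657 (.node .leaf 18692001759232 (.node .leaf 18692016439296 .leaf))) 18692016439297 (.node (.node .leaf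 18692016504832 .leaf) 18692017487872 (.node .leaf 18692017487873 (.node .leaf 18692017487874 .leaf)))) 18692017491968 (.node (.node (.node .leaf 18692018536449 .leaf) 18692019585024 (.node .leaf 18692033216513 (.node .leaf 18692034265088 .leaf))) 18692049993728 (.node (.node .leaf 18692051042305 .leaf) 18692052090880 (.node .leaf 18692066770944 (.node .leaf 18692084596736 .leaf))))))) 18692234543104 (.node (.node (.node (.node (.node (.node .leaf 18692234543105 .leaf) 18692235591680 (.node .leaf 18692251320320 .leaf)) 18692251320321 (.node (.node .leaf 18692251320322 .leaf) 18692251324416 (.node .leaf 18692252368896 (.node .leaf 18692252368897 .leaf)))) 18692253417472 (.node (.node (.node .leaf 18692268097536 .leaf) 18692284874752 (.node .leaf 18692284874753 (.node .leaf 18692285923328 .leaf))) 18692318429184 (.node (.node .leaf 18692502978561 .leaf) 18692502978562 (.node .leaf 18692502982656 (.node .leaf 18692504027136 .leaf))))) 18692504027137 (.node (.node (.node (.node .leaf 18692505075712 .leaf) 18692519755776 (.node .leaf 18692519755777 (.node .leaf 18692519755778 .leaf))) 18692519755779 (.node (.node .leaf 18692519759872 .leaf) 18692519759873 (.node .leaf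 18692520804353 (.node .leaf 18692520804354 .leaf)))) 18692520808448 (.node (.node (.node .leaf 18692521852929 .leaf) 18692522901504 (.node .leaf 18692536532992 (.node .leaf 18692536532993 .leaf))) 18692537581568 (.node (.node .leaf 18692553310209 .leaf) 18692553310210 (.node .leaf 18692553314304 (.node .leaf 18692554358785 .leaf)))))) 18692555407360 (.node (.node (.node (.node (.node .leaf 18692570087424 .leaf) 18692586864641 (.node .leaf 18692587913216 (.node .leaf 18692620419072 .leaf))) 18692771414016 (.node (.node .leaf 18692788191233 .leaf) 18692789239808 (.node .leaf 18692821745664 (.node .leaf 18695992639488 .leaf)))) 18695992639489 (.node (.node (.node .leaf 18695993688064 .leaf) 18696009416704 (.node .leaf 18696009416705 (.node .leaf 18696009416706 .leaf))) 18696009416960 (.node (.node .leaf 18696009420800 .leaf) 18696009482240 (.node .leaf 18696010465280 (.node .leaf 18696010465281 .leaf))))) 18696011513856 (.node (.node (.node (.node .leaf 18696026193920 .leaf) 18696042971136 (.node .leaf 18696042971137 (.node .leaf 18696044019712 .leaf))) 18696076525568 (.node (.node .leaf 18696261074944 .leaf) 18696261074945 (.node .leaf 18696261074946 (.node .leaf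 18696261079040 .leaf)))) 18696262123520 (.node (.node (.node .leaf 18696262123521 .leaf) 18696263172096 (.node .leaf 18696277852160 (.node .leaf 18696277852161 .leaf))) 18696277917696 (.node (.node .leaf 18696278900736 .leaf) 18696278900737 (.node .leaf 18696278900738 (.node .leaf 18696278904832 .leaf))))))))) 18696279949312 (.node (.node (.node (.node (.node (.node (.node (.node .leaf 18696279949313 .leaf) 18696280997888 (.node .leaf 18696294629376 .leaf)) 18696294629377 (.node (.node .leaf 18696295677952 .leaf) 18696311406592 (.node .leaf 18696312455168 (.node .leaf 18696312455169 .leaf)))) 18696313503744 (.node (.node (.node .leaf 18696328183808 .leaf) 18696346009600 (.node .leaf 18696529510400 (.node .leaf 18696546287616 .leaf))) 18696546287617 (.node (.node .leaf 18696547336192 .leaf) 18696579842048 (.node .leaf 18696797945856 (.node .leaf 18696797945857 .leaf))))) 18696798994432 (.node (.node (.node (.node .leaf 18696814723072 .leaf) 18696814723073 (.node .leaf 18696814723074 (.node .leaf 18696814727168 .leaf))) 18696815771648 (.node (.node .leaf 18696815771649 .leaf) 18696816820224 (.node .leaf 18696831500288 (.node .leaf 18696848277504 .leaf)))) 18696848277505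 (.node (.node (.node .leaf 18696849326080 .leaf) 18696881831936 (.node .leaf 18697083158528 (.node .leaf 18700287606784 .leaf))) 18700304384000 (.node (.node .leaf 18700304384001 .leaf) 18700305432576 (.node .leaf 18700337938432 (.node .leaf 18700556042240 .leaf)))))) 18700556042241 (.node (.node (.node (.node (.node .leaf 18700557090816 .leaf) 18700572819456 (.node .leaf 18700573868032 (.node .leaf 18700573868033 .leaf))) 18700574916608 (.node (.node .leaf 18700589596672 .leaf) 18700607422464 (.node .leaf 18700841254912 (.node .leaf 18701092913152 .leaf)))) 18701109690368 (.node (.node (.node .leaf 18701109690369 .leaf) 18701110738944 (.node .leaf 18701143244800 (.node .leaf 18704599351296 .leaf))) 18704851009536 (.node (.node .leaf 18704868835328 .leaf) 18705404657664 (.node .leaf 18760417148928 (.node .leaf 18760417148929 .leaf))))) 18760418197504 (.node (.node (.node (.node .leaf 18760433926144 .leaf) 18760433926145 (.node .leaf 18760433926146 (.node .leaf 18760433930240 .leaf))) 18760434974720 (.node (.node .leaf 18760434974721 .leaf) 18760436023296 (.node .leaf 18760450703360 (.node .leaf 18760467480576 .leaf)))) 18760467480577 (.node (.node (.node .leaf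 18760468529152 .leaf) 18760501035008 (.node .leaf 18760685584385 (.node .leaf 18760685584386 .leaf))) 18760685588480 (.node (.node .leaf 18760686632960 .leaf) 18760686632961 (.node .leaf 18760687681536 (.node .leaf 18760702361600 .leaf))))))) 18760702361601 (.node (.node (.node (.node (.node (.node .leaf 18760702361602 .leaf) 18760702361603 (.node .leaf 18760702365696 .leaf)) 18760702365697 (.node (.node .leaf 18760703410177 .leaf) 18760703410178 (.node .leaf 18760703414272 (.node .leaf 18760704458753 .leaf)))) 18760705507328 (.node (.node (.node .leaf 18760719138816 .leaf) 18760719138817 (.node .leaf 18760720187392 (.node .leaf 18760735916033 .leaf))) 18760735916034 (.node (.node .leaf 18760735920128 .leaf) 18760736964609 (.node .leaf 18760738013184 (.node .leaf 18760752693248 .leaf))))) 18760769470465 (.node (.node (.node (.node .leaf 18760770519040 .leaf) 18760803024896 (.node .leaf 18760954019840 (.node .leaf 18760970797057 .leaf))) 18760971845632 (.node (.node .leaf 18761004351488 .leaf) 18764712116224 (.node .leaf 18764728893440 (.node .leaf 18764728893441 .leaf)))) 18764729942016 (.node (.node (.node .leaf 18764762447872 .leaf) 18764980551680 (.node .leaf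 18764980551681 (.node .leaf 18764981600256 .leaf))) 18764997328896 (.node (.node .leaf 18764997328897 .leaf) 18764997328898 (.node .leaf 18764997332992 (.node .leaf 18764998377472 .leaf)))))) 18764998377473 (.node (.node (.node (.node (.node .leaf 18764999426048 .leaf) 18765014106112 (.node .leaf 18765030883328 (.node .leaf 18765030883329 .leaf))) 18765031931904 (.node (.node .leaf 18765064437760 .leaf) 18765265764352 (.node .leaf 18769023860736 (.node .leaf 18769275518976 .leaf)))) 18769292296192 (.node (.node (.node .leaf 18769292296193 .leaf) 18769293344768 (.node .leaf 18769325850624 (.node .leaf 18773587263488 .leaf))) 18829136625664 (.node (.node .leaf 18829153402881 .leaf) 18829154451456 (.node .leaf 18829186957312 (.node .leaf 18833448370176 .leaf))))) 19791209299968 (.node (.node (.node (.node .leaf 19791226077184 .leaf) 19791226077185 (.node .leaf 19791227125760 (.node .leaf 19791259631616 .leaf))) 19791477735424 (.node (.node .leaf 19791477735425 .leaf) 19791478784000 (.node .leaf 19791494512640 (.node .leaf 19791495561216 .leaf)))) 19791495561217 (.node (.node (.node .leaf 19791496609792 .leaf) 19791511289856 (.node .leaf 19791529115648 (.node .leaf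 19791762948096 .leaf))) 19792014606336 (.node (.node .leaf 19792031383552 .leaf) 19792031383553 (.node .leaf 19792032432128 (.node .leaf 19792064937984 .leaf)))))))) 19795521044480 (.node (.node (.node (.node (.node (.node (.node .leaf 19795772702720 .leaf) 19795790528512 (.node .leaf 19796326350848 .leaf)) 19859945553920 (.node (.node .leaf 19860197212160 .leaf) 19860213989376 (.node .leaf 19860213989377 (.node .leaf 19860215037952 .leaf)))) 19860247543808 (.node (.node (.node .leaf 19864508956672 .leaf) 35184372088832 (.node .leaf 35184388866048 (.node .leaf 35184388866049 .leaf))) 35184388866304 (.node (.node .leaf 35184389914624 .leaf) 35184422420480 (.node .leaf 35184640524288 (.node .leaf 35184640524289 .leaf))))) 35184640524544 (.node (.node (.node (.node .leaf 35184641572864 .leaf) 35184657301505 (.node .leaf 35184657301760 (.node .leaf 35184657301761 .leaf))) 35184658350336 (.node (.node .leaf 35184674078720 .leaf) 35184690856192 (.node .leaf 35188683833344 (.node .leaf 35188935491584 .leaf)))) 35188952268800 (.node (.node (.node .leaf 35188952268801 .leaf) 35188952269056 (.node .leaf 35188953317376 (.node .leaf 35188985823232 .leaf))) 35193247236096 (.node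 (.node .leaf 35253108342784 .leaf) 35253360001024 (.node .leaf 35253376778240 (.node .leaf 35253376778241 .leaf)))))) 35253377826816 (.node (.node (.node (.node (.node .leaf 35253410332672 .leaf) 35257671745536 (.node .leaf 36283883716608 (.node .leaf 36283883716609 .leaf))) 36283884765184 (.node (.node .leaf 36283900493824 .leaf) 36283900493825 (.node .leaf 36283900493826 (.node .leaf 36283900497920 .leaf)))) 36283901542400 (.node (.node (.node .leaf 36283901542401 .leaf) 36283902590976 (.node .leaf 36283917271040 (.node .leaf 36283934048256 .leaf))) 36283934048257 (.node (.node .leaf 36283935096832 .leaf) 36283967602688 (.node .leaf 36284152152064 (.node .leaf 36284152152065 .leaf))))) 36284152152066 (.node (.node (.node (.node .leaf 36284152156160 .leaf) 36284153200640 (.node .leaf 36284153200641 (.node .leaf 36284154249216 .leaf))) 36284168929280 (.node (.node .leaf 36284168929281 .leaf) 36284168929282 (.node .leaf 36284168929283 (.node .leaf 36284168933376 .leaf)))) 36284168933377 (.node (.node (.node .leaf 36284169977857 .leaf) 36284169977858 (.node .leaf 36284169981952 (.node .leaf 36284171026432 .leaf))) 36284171026433 (.node (.node .leaf 36284172075008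 .leaf) 36284185706496 (.node .leaf 36284185706497 (.node .leaf 36284186755072 .leaf))))))) 36284202483713 (.node (.node (.node (.node (.node (.node .leaf 36284202483714 .leaf) 36284202487808 (.node .leaf 36284203532288 .leaf)) 36284203532289 (.node (.node .leaf 36284204580864 .leaf) 36284219260928 (.node .leaf 36284236038144 (.node .leaf 36284236038145 .leaf)))) 36284237086720 (.node (.node (.node .leaf 36284269592576 .leaf) 36284420587520 (.node .leaf 36284437364736 (.node .leaf 36284437364737 .leaf))) 36284438413312 (.node (.node .leaf 36284470919168 .leaf) 36284689022976 (.node .leaf 36284705800193 (.node .leaf 36284706848768 .leaf))))) 36284739354624 (.node (.node (.node (.node .leaf 36288178683904 .leaf) 36288195461120 (.node .leaf 36288195461121 (.node .leaf 36288196509696 .leaf))) 36288229015552 (.node (.node .leaf 36288447119360 .leaf) 36288447119361 (.node .leaf 36288448167936 (.node .leaf 36288463896576 .leaf)))) 36288463896577 (.node (.node (.node .leaf 36288463896578 .leaf) 36288463900672 (.node .leaf 36288464945152 (.node .leaf 36288464945153 .leaf))) 36288465993728 (.node (.node .leaf 36288480673792 .leaf) 36288497451008 (.node .leaf 36288497451009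 (.node .leaf 36288498499584 .leaf)))))) 36288531005440 (.node (.node (.node (.node (.node .leaf 36288732332032 .leaf) 36289000767488 (.node .leaf 36292490428416 (.node .leaf 36292742086656 .leaf))) 36292758863872 (.node (.node .leaf 36292758863873 .leaf) 36292759912448 (.node .leaf 36292792418304 (.node .leaf 36297053831168 .leaf)))) 36352603193344 (.node (.node (.node .leaf 36352619970560 .leaf) 36352619970561 (.node .leaf 36352621019136 (.node .leaf 36352653524992 .leaf))) 36352871628800 (.node (.node .leaf 36352888406017 .leaf) 36352889454592 (.node .leaf 36352921960448 (.node .leaf 36356914937856 .leaf))))) 36357183373312 (.node (.node (.node (.node .leaf 37383412121600 .leaf) 37383663779840 (.node .leaf 37383680557056 (.node .leaf 37383680557057 .leaf))) 37383681605632 (.node (.node .leaf 37383714111488 .leaf) 37387975524352 (.node .leaf 53876069761024 (.node .leaf 53876086538240 .leaf)))) 53876086538241 (.node (.node (.node .leaf 53876087586816 .leaf) 53876120092672 (.node .leaf 53876338196480 (.node .leaf 53876354973696 .leaf))) 53876354973697 (.node (.node .leaf 53876356022272 .leaf) 53876388528128 (.node .leaf 53880381505536 (.node .leaf 53880649940992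 .leaf)))))))))))
def ttPairs : List (Nat × Nat) := [(0, 3), (0, 6), (0, 8), (1, 2), (1, 3), (1, 4), (2, 1), (2, 9), (2, 10), (3, 0), (3, 1), (3, 4), (4, 1), (4, 3), (4, 11), (5, 6), (5, 7), (5, 11), (6, 0), (6, 5), (6, 8), (7, 5), (7, 9), (7, 11), (8, 0), (8, 6), (8, 10), (9, 2), (9, 7), (9, 10), (10, 2), (10, 8), (10, 9), (11, 4), (11, 5), (11, 7)]

def ttFinset : Finset (Sym2 (Fin 12)) :=
  {s(1, 2), s(1, 3), s(1, 4), s(2, 10), s(2, 9), s(3, 12), s(4, 11), s(12, 8), s(12, 6), s(11, 7), s(11, 5), s(3, 4), s(10, 8), s(9, 7), s(10, 9), s(8, 6), s(7, 5), s(6, 5)}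

theorem tt_adj_iff (u v : Fin 12) :
    truncatedTetrahedral.Adj u v ↔ s(u, v) ∈ ttFinset ∧ u ≠ v := by
  have hset : ({s(1, 2), s(1, 3), s(1, 4), s(2, 10), s(2, 9), s(3, 12), s(4, 11), s(12, 8), s(12, 6), s(11, 7), s(11, 5), s(3, 4), s(10, 8), s(9, 7), s(10, 9), s(8, 6), s(7, 5), s(6, 5)} : Set (Sym2 (Fin 12))) = ↑ttFinset := by
    simp [ttFinset]
  rw [truncatedTetrahedral, hset, SimpleGraph.fromEdgeSet_adj, Finset.mem_coe]

theorem tt_pairs {u v : Fin 12} (h : truncatedTetrahedral.Adj u v) :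
    ((u : ℕ), (v : ℕ)) ∈ ttPairs := by
  rw [tt_adj_iff] at h
  revert h
  revert u v
  decide

theorem fact1 : ttTree.mem 18692620419072 = true := by decide
theorem fact2 : ttTree.all (fun n => n / 16 % 16 == 0) = true := by decide
theorem fact3 : ttTree.all (fun n => ttPairs.all (fun p =>
    decide (n / 16 ^ p.1 % 16 < 2) || ttTree.mem (n + 16 ^ p.2 - 2 * 16 ^ p.1))) = true := by decide

/-! ### Encoding of configurations -/

def enc (C : Fin 12 → ℕ) : ℕ := ∑ i : Fin 12, 16 ^ (i : ℕ) * C i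

theorem enc_eq (C : Fin 12 → ℕ) : enc C =
    16^0 * C 0 + (16^1 * C 1 + (16^2 * C 2 + (16^3 * C 3 + (16^4 * C 4 + (16^5 * C 5 +
    (16^6 * C 6 + (16^7 * C 7 + (16^8 * C 8 + (16^9 * C 9 + (16^10 * C 10 + (16^11 * C 11 + 0))))))))))) := rfl

theorem sum12 (C : Fin 12 → ℕ) : (∑ v, C v) =
    C 0 + (C 1 + (C 2 + (C 3 + (C 4 + (C 5 + (C 6 + (C 7 + (C 8 + (C 9 + (C 10 + (C 11 + 0))))))))))) := rfl

theorem digit_enc (C : Fin 12 → ℕ) (h : ∀ i, C i ≤ 15) (u : Fin 12) :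
    enc C / 16 ^ (u : ℕ) % 16 = C u := by
  have h0 := h 0; have h1 := h 1; have h2 := h 2; have h3 := h 3
  have h4 := h 4; have h5 := h 5; have h6 := h 6; have h7 := h 7
  have h8 := h 8; have h9 := h 9; have h10 := h 10; have h11 := h 11
  rw [enc_eq]
  norm_num
  fin_cases u
  · show _ = C 0; norm_num; omega
  · show _ = C 1; norm_num; omega
  · show _ = C 2; norm_num; omega
  · show _ = C 3; norm_num; omega
  · show _ = C 4; norm_num; omega
  · show _ = C 5; norm_num; omega
  · show _ = C 6; norm_num; omega
  · show _ = C 7; norm_num; omega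
  · show _ = C 8; norm_num; omega
  · show _ = C 9; norm_num; omega
  · show _ = C 10; norm_num; omega
  · show _ = C 11; norm_num; omega

theorem sum_move {V : Type} [DecidableEq V] [Fintype V] (C : V → ℕ) (u v : V)
    (huv : u ≠ v) (hu : 2 ≤ C u) (w : V → ℕ) :
    (∑ i, w i * (if i = u then C u - 2 else if i = v then C v + 1 else C i)) + 2 * w u
      = (∑ i, w i * C i) + w v := by
  have key : ∀ i : V, w i * (if i = u then C u - 2 else if i = v then C v + 1 else C i)
      + (if i = u then 2 * w i else 0)
      = w i * C i + (if i = v then w i else 0) := by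
    intro i
    by_cases h1 : i = u
    · subst h1
      rw [if_pos rfl, if_pos rfl, if_neg huv, add_zero]
      calc w i * (C i - 2) + 2 * w i = w i * ((C i - 2) + 2) := by ring
        _ = w i * C i := by rw [Nat.sub_add_cancel hu]
    · by_cases h2 : i = v
      · subst h2
        rw [if_neg h1, if_neg h1, if_pos rfl, if_pos rfl, add_zero]
        ring
      · rw [if_neg h1, if_neg h1, if_neg h2, if_neg h2, add_zero]
  have hsum := Finset.sum_congr rfl (fun i (_ : i ∈ Finset.univ) => key i)
  rw [Finset.sum_add_distrib, Finset.sum_add_distrib,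
    Finset.sum_ite_eq' Finset.univ u (fun i => 2 * w i),
    Finset.sum_ite_eq' Finset.univ v (fun i => w i),
    if_pos (Finset.mem_univ u), if_pos (Finset.mem_univ v)] at hsum
  exact hsum

/-! ### The invariant -/

def PInv (C : Fin 12 → ℕ) : Prop :=
  (∑ v, C v) ≤ 12 ∧ NTree.mem (enc C) ttTree = true

theorem inv_step {C C' : Fin 12 → ℕ} (h : PebblingMove truncatedTetrahedral C C')
    (hI : PInv C) : PInv C' := by
  obtain ⟨u, v, hadj, hu, rfl⟩ := h
  obtain ⟨hsum, hmem⟩ := hI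
  have huv : u ≠ v := hadj.ne
  have hws : (∑ i, (if i = u then C u - 2 else if i = v then C v + 1 else C i)) + 2
      = (∑ i, C i) + 1 := by
    have := sum_move C u v huv hu (fun _ => 1)
    simpa using this
  have henc : (∑ i : Fin 12, 16 ^ (i : ℕ) * (if i = u then C u - 2 else if i = v then C v + 1 else C i))
      + 2 * 16 ^ (u : ℕ) = enc C + 16 ^ (v : ℕ) :=
    sum_move C u v huv hu (fun i => 16 ^ (i : ℕ))
  have hCle : ∀ i, C i ≤ 15 := fun i =>
    le_trans (Finset.single_le_sum (f := C) (fun _ _ => Nat.zero_le _) (Finset.mem_univ i))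
      (le_trans hsum (by norm_num))
  have hdig : enc C / 16 ^ (u : ℕ) % 16 = C u := digit_enc C hCle u
  have hall := NTree.mem_all fact3 hmem
  rw [List.all_eq_true] at hall
  have hthis := hall ((u : ℕ), (v : ℕ)) (tt_pairs hadj)
  simp only [Bool.or_eq_true, decide_eq_true_eq] at hthis
  rcases hthis with hlt | hmem'
  · omega
  · constructor
    · show (∑ i : Fin 12, (if i = u then C u - 2 else if i = v then C v + 1 else C i)) ≤ 12
      omega
    · show NTree.mem (enc (fun w => if w = u then C u - 2 else if w = v then C v + 1 else C w)) ttTree = true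
      have hval : enc (fun w => if w = u then C u - 2 else if w = v then C v + 1 else C w)
          = enc C + 16 ^ (v : ℕ) - 2 * 16 ^ (u : ℕ) := by
        have : enc (fun w => if w = u then C u - 2 else if w = v then C v + 1 else C w)
            + 2 * 16 ^ (u : ℕ) = enc C + 16 ^ (v : ℕ) := henc
        omega
      rw [hval]
      exact hmem'

theorem inv_rtg {C' : Fin 12 → ℕ}
    (hrtg : Relation.ReflTransGen (PebblingMove truncatedTetrahedral)
      (fun v => if v = 6 then 7 else if v = 7 then 3 else
        if v = 10 then 1 else if v = 11 then 1 else 0) C') : PInv C' := by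
  induction hrtg with
  | refl =>
    constructor
    · decide
    · show NTree.mem (enc _) ttTree = true
      have : enc (fun v => if v = 6 then 7 else if v = 7 then 3 else
          if v = 10 then 1 else if v = 11 then 1 else 0) = 18692620419072 := by decide
      rw [this]
      exact fact1
  | tail _ hbc ih => exact inv_step hbc ih

theorem partA : ¬ PebblingSolvable truncatedTetrahedral
    (fun v => if v = 6 then 7 else if v = 7 then 3 else
      if v = 10 then 1 else if v = 11 then 1 else 0) 1 := by
  rintro ⟨C', hrtg, hr⟩
  have hinv : PInv C' := inv_rtg hrtg
  have hCle : ∀ i, C' i ≤ 15 := fun i =>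
    le_trans (Finset.single_le_sum (f := C') (fun _ _ => Nat.zero_le _) (Finset.mem_univ i))
      (le_trans hinv.1 (by norm_num))
  have hdig : enc C' / 16 ^ ((1 : Fin 12) : ℕ) % 16 = C' 1 := digit_enc C' hCle 1
  have h2 := NTree.mem_all fact2 hinv.2
  rw [beq_iff_eq] at h2
  have : ((1 : Fin 12) : ℕ) = 1 := rfl
  rw [this] at hdig
  norm_num at hdig
  omega

theorem rtg_mono {V : Type} [DecidableEq V] {G : SimpleGraph V} {C C' : V → ℕ}
    (h : Relation.ReflTransGen (PebblingMove G) C C') :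
    ∀ D : V → ℕ, (∀ x, C x ≤ D x) →
      ∃ D', Relation.ReflTransGen (PebblingMove G) D D' ∧ ∀ x, C' x ≤ D' x := by
  induction h with
  | refl => exact fun D hD => ⟨D, Relation.ReflTransGen.refl, hD⟩
  | tail _ hbc ih =>
    intro D hD
    obtain ⟨D', hD', hle⟩ := ih D hD
    obtain ⟨u, v, hadj, hu, rfl⟩ := hbc
    refine ⟨fun w => if w = u then D' u - 2 else if w = v then D' v + 1 else D' w,
      hD'.tail ⟨u, v, hadj, le_trans hu (hle u), rfl⟩, ?_⟩
    intro x
    by_cases h1 : x = u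
    · subst h1; simp; have := hle x; omega
    · by_cases h2 : x = v
      · subst h2; simp [h1]; have := hle x; omega
      · simp [h1, h2]; exact hle x

theorem solvable_mono {V : Type} [DecidableEq V] {G : SimpleGraph V} {C D : V → ℕ} {r : V}
    (hs : PebblingSolvable G C r) (hle : ∀ x, C x ≤ D x) : PebblingSolvable G D r := by
  obtain ⟨C', h, hr⟩ := hs
  obtain ⟨D', hD', hle'⟩ := rtg_mono h D hle
  exact ⟨D', hD', le_trans hr (hle' r)⟩

theorem moves_pile {V : Type} [DecidableEq V] {G : SimpleGraph V} {u w : V} (hadj : G.Adj u w) :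
    ∀ (m : ℕ) (C : V → ℕ), 2 * m ≤ C u →
    Relation.ReflTransGen (PebblingMove G) C
      (fun x => if x = u then C u - 2 * m else if x = w then C w + m else C x) := by
  have hune : u ≠ w := hadj.ne
  intro m
  induction m with
  | zero =>
    intro C _
    have heq : (fun x => if x = u then C u - 2 * 0 else if x = w then C w + 0 else C x) = C := by
      funext x
      by_cases h1 : x = u
      · subst h1; simp
      · by_cases h2 : x = w
        · subst h2; simp [h1]
        · simp [h1, h2]
    rw [heq]
  | succ m ih =>
    intro C h
    have step1 : PebblingMove G C
        (fun x => if x = u then C u - 2 else if x = w then C w + 1 else C x) :=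
      ⟨u, w, hadj, by omega, rfl⟩
    have h2 : 2 * m ≤ (fun x => if x = u then C u - 2 else if x = w then C w + 1 else C x) u := by
      rw [show ((fun x => if x = u then C u - 2 else if x = w then C w + 1 else C x) u)
        = C u - 2 from if_pos rfl]
      omega
    have htail := ih (fun x => if x = u then C u - 2 else if x = w then C w + 1 else C x) h2
    have heq : (fun x => if x = u then
          (fun x => if x = u then C u - 2 else if x = w then C w + 1 else C x) u - 2 * m
        else if x = w then
          (fun x => if x = u then C u - 2 else if x = w then C w + 1 else C x) w + m
        else (fun x => if x = u then C u - 2 else if x = w then C w + 1 else C x) x)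
        = (fun x => if x = u then C u - 2 * (m + 1) else if x = w then C w + (m + 1) else C x) := by
      funext x
      by_cases h1 : x = u
      · subst h1; simp [hune]; omega
      · by_cases h2 : x = w
        · subst h2; simp [h1, hune]; omega
        · simp [h1, h2]
    rw [heq] at htail
    exact Relation.ReflTransGen.head step1 htail

theorem walk_solvable {V : Type} [DecidableEq V] {G : SimpleGraph V} {u r : V}
    (p : G.Walk u r) : ∀ C : V → ℕ, 2 ^ p.length ≤ C u → PebblingSolvable G C r := by
  induction p with
  | nil => intro C h; exact ⟨C, Relation.ReflTransGen.refl, by simpa using h⟩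
  | @cons a b c hadj q ih =>
    intro C hC
    have h1 : 2 * 2 ^ q.length ≤ C a := by
      rw [SimpleGraph.Walk.length_cons, pow_succ] at hC
      omega
    have hmv := moves_pile hadj (2 ^ q.length) C h1
    have hb : 2 ^ q.length ≤ (fun x => if x = a then C a - 2 * 2 ^ q.length
        else if x = b then C b + 2 ^ q.length else C x) b := by
      simp [Ne.symm hadj.ne]
    obtain ⟨C2, h2, hr2⟩ := ih (fun x => if x = a then C a - 2 * 2 ^ q.length
        else if x = b then C b + 2 ^ q.length else C x) hb
    exact ⟨C2, hmv.trans h2, hr2⟩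

theorem toOne : ∀ v : Fin 12, ∃ p : truncatedTetrahedral.Walk v 1, p.length ≤ 3 := by
  have A : ∀ a b : Fin 12, s(a, b) ∈ ttFinset ∧ a ≠ b → truncatedTetrahedral.Adj a b :=
    fun a b => (tt_adj_iff a b).2
  intro v
  fin_cases v
  · exact ⟨.cons (A 0 3 (by decide)) (.cons (A 3 1 (by decide)) .nil), by simp⟩
  · exact ⟨.nil, by simp⟩
  · exact ⟨.cons (A 2 1 (by decide)) .nil, by simp⟩
  · exact ⟨.cons (A 3 1 (by decide)) .nil, by simp⟩
  · exact ⟨.cons (A 4 1 (by decide)) .nil, by simp⟩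
  · exact ⟨.cons (A 5 11 (by decide)) (.cons (A 11 4 (by decide)) (.cons (A 4 1 (by decide)) .nil)), by simp⟩
  · exact ⟨.cons (A 6 0 (by decide)) (.cons (A 0 3 (by decide)) (.cons (A 3 1 (by decide)) .nil)), by simp⟩
  · exact ⟨.cons (A 7 9 (by decide)) (.cons (A 9 2 (by decide)) (.cons (A 2 1 (by decide)) .nil)), by simp⟩
  · exact ⟨.cons (A 8 0 (by decide)) (.cons (A 0 3 (by decide)) (.cons (A 3 1 (by decide)) .nil)), by simp⟩
  · exact ⟨.cons (A 9 2 (by decide)) (.cons (A 2 1 (by decide)) .nil), by simp⟩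
  · exact ⟨.cons (A 10 2 (by decide)) (.cons (A 2 1 (by decide)) .nil), by simp⟩
  · exact ⟨.cons (A 11 4 (by decide)) (.cons (A 4 1 (by decide)) .nil), by simp⟩

theorem pairWalk (u r : Fin 12) : ∃ p : truncatedTetrahedral.Walk u r, p.length ≤ 6 := by
  obtain ⟨p1, hp1⟩ := toOne u
  obtain ⟨p2, hp2⟩ := toOne r
  refine ⟨p1.append p2.reverse, ?_⟩
  rw [SimpleGraph.Walk.length_append, SimpleGraph.Walk.length_reverse]
  omega

theorem h768 : ∀ (r : Fin 12) (C : Fin 12 → ℕ), (∑ v, C v) = 768 →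
    PebblingSolvable truncatedTetrahedral C r := by
  intro r C hsum
  have hbig : ∃ u, 64 ≤ C u := by
    by_contra hcon
    push_neg at hcon
    have hle : (∑ v, C v) ≤ ∑ _v : Fin 12, 63 :=
      Finset.sum_le_sum (fun i _ => by have := hcon i; omega)
    simp at hle
    omega
  obtain ⟨u, hu⟩ := hbig
  obtain ⟨p, hp⟩ := pairWalk u r
  apply walk_solvable p C
  calc 2 ^ p.length ≤ 2 ^ 6 := Nat.pow_le_pow_right (by norm_num) hp
    _ ≤ C u := hu


theorem partB_final :
    12 < pebblingNumber truncatedTetrahedral ∧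
    pebblingNumber truncatedTetrahedral ≠ Fintype.card (Fin 12) := by
  have hlb : ∀ t ∈ {t : ℕ | ∀ (r : Fin 12) (C : Fin 12 → ℕ),
      (∑ v, C v) = t → PebblingSolvable truncatedTetrahedral C r}, 13 ≤ t := by
    intro t ht
    by_contra hc
    push_neg at hc
    have ht12 : t ≤ 12 := by omega
    set Ct : Fin 12 → ℕ := fun v => if v = 6 then min t 7 else if v = 7 then min (t - 7) 3 else
      if v = 10 then min (t - 10) 1 else if v = 11 then min (t - 11) 1 else 0 with hCt
    have hsum : (∑ v, Ct v) = t := by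
      rw [sum12]
      simp (config := { decide := true }) only [hCt, if_true, if_false]
      omega
    have hsolv := ht 1 Ct hsum
    have hle : ∀ x, Ct x ≤ (fun v => if v = 6 then 7 else if v = 7 then 3 else
        if v = 10 then 1 else if v = 11 then 1 else 0) x := by
      intro x
      simp only [hCt]
      by_cases h6 : x = 6 <;> by_cases h7 : x = 7 <;> by_cases h10 : x = 10 <;>
        by_cases h11 : x = 11 <;> simp [h6, h7, h10, h11] <;> omega
    exact partA (solvable_mono hsolv hle)
  have hne : ({t : ℕ | ∀ (r : Fin 12) (C : Fin 12 → ℕ),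
      (∑ v, C v) = t → PebblingSolvable truncatedTetrahedral C r}).Nonempty := ⟨768, h768⟩
  have h13 : 13 ≤ pebblingNumber truncatedTetrahedral := le_csInf hne hlb
  constructor
  · omega
  · have : Fintype.card (Fin 12) = 12 := by simp
    omega


/-- The size-12 configuration with 7 pebbles on vertex 6, 3 on vertex 7, and
1 each on vertices 10 and 11 is unsolvable for target vertex 1; hence the
pebbling number of the truncated tetrahedral graph exceeds 12 and the graph
is not Class 0. -/
theorem truncatedTetrahedral_not_class0 :
    ¬ PebblingSolvable truncatedTetrahedral
        (fun v => if v = 6 then 7 else if v = 7 then 3 else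
          if v = 10 then 1 else if v = 11 then 1 else 0) 1 ∧
    12 < pebblingNumber truncatedTetrahedral ∧
    pebblingNumber truncatedTetrahedral ≠ Fintype.card (Fin 12) := by
  exact ⟨partA, partB_final.1, partB_final.2⟩
end
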